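/- arXiv:2007.08217 — 2 statements merged into one kernel-verified Lean document; each statement's English description precedes it below -/
import Mathlib

section
/- For two distinct positive integers a and b with binary representations, define the extended label L(x) of x = b_1 b_2 ... b_ℓ (binary, length ℓ) as the infinite periodic sequence repeating the block 1,0,b_1,b_1,b_2,b_2,...,b_ℓ,b_ℓ. Then there exists an index k ≤ 2·⌊log₂(min(a,b))⌋ + 6 such that the k-th symbols of L(a) and L(b) differ. -/
/-- The finite block `(1,0,b₁,b₁,…,b_ℓ,b_ℓ)` of the extended label of `x`,
where `b₁…b_ℓ` is the binary representation of `x` (MSB first). -/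
def extBlock (x : ℕ) : List Bool :=
  true :: false :: ((Nat.bits x).reverse.flatMap (fun b => [b, b]))

/-- The `k`-th symbol (indices starting at 1) of the extended label of `x`,
obtained by repeating `extBlock x` indefinitely. -/
def extLabel (x k : ℕ) : Bool :=
  (extBlock x).getD ((k - 1) % (extBlock x).length) false

/-!
The extended label of `x` has period `2 · size x + 2`, and each period starts with `1, 0`.
If `a` and `b` have binary representations of the same length, their labels have the same
period and differ at the first copy of a bit where `a` and `b` differ. Otherwise, say `a` is
shorter: after one period the label of `a` restarts with `1, 0`, while the label of `b` is
still reading a doubled bit `c, c`, so one of these two positions tells them apart.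
-/

namespace List

variable {α : Type*}

theorem getD_flatMap_pair_self (l : List α) (d : α) (i : ℕ) :
    (l.flatMap fun b => [b, b]).getD i d = l.getD (i / 2) d := by
  induction l generalizing i with
  | nil => simp
  | cons x t ih =>
    match i with
    | 0 => simp
    | 1 => simp
    | i + 2 => simpa [Nat.add_div_right i two_pos] using ih i

theorem exists_getD_ne_of_ne {l₁ l₂ : List α} (hlen : l₁.length = l₂.length) (hne : l₁ ≠ l₂)
    (d : α) : ∃ i < l₁.length, l₁.getD i d ≠ l₂.getD i d := by
  by_contra! h
  exact hne <| ext_getElem hlen fun i h₁ h₂ => by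
    rw [← getD_eq_getElem _ d h₁, ← getD_eq_getElem _ d h₂, h i h₁]

end List

theorem Nat.bits_injective : Function.Injective Nat.bits := fun a b h => by
  rw [← Nat.ofDigits_digits 2 a, ← Nat.ofDigits_digits 2 b, Nat.digits_two_eq_bits,
    Nat.digits_two_eq_bits, h]

theorem Nat.size_le_log_add_one (x : ℕ) : x.size ≤ Nat.log 2 x + 1 :=
  Nat.size_le.2 (Nat.lt_pow_succ_log_self one_lt_two x)

theorem Nat.size_min (a b : ℕ) : (min a b).size = min a.size b.size :=
  Monotone.map_min fun _ _ => Nat.size_le_size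

theorem extBlock_length (x : ℕ) : (extBlock x).length = 2 * x.size + 2 := by
  simp [extBlock, Nat.size_eq_bits_len, mul_comm]

theorem extBlock_getD_add_two (x i : ℕ) :
    (extBlock x).getD (i + 2) false = x.bits.reverse.getD (i / 2) false := by
  simp only [extBlock, List.getD_cons_succ, List.getD_flatMap_pair_self]

theorem extLabel_add_one (x k : ℕ) :
    extLabel x (k + 1) = (extBlock x).getD (k % (extBlock x).length) false := by
  simp [extLabel]

theorem exists_extLabel_ne_of_size_eq {a b : ℕ} (h : a.size = b.size) (hab : a ≠ b) :
    ∃ k, 1 ≤ k ∧ k ≤ 2 * a.size + 1 ∧ extLabel a k ≠ extLabel b k := by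
  obtain ⟨i, hi, hne⟩ := List.exists_getD_ne_of_ne (l₁ := a.bits.reverse) (l₂ := b.bits.reverse)
    (by simp [Nat.size_eq_bits_len, h])
    (fun e => hab (Nat.bits_injective (List.reverse_injective e))) false
  rw [List.length_reverse, Nat.size_eq_bits_len] at hi
  have label_eq (x : ℕ) (hx : x.size = a.size) :
      extLabel x (2 * i + 2 + 1) = x.bits.reverse.getD i false := by
    rw [extLabel_add_one, Nat.mod_eq_of_lt (by rw [extBlock_length]; omega),
      extBlock_getD_add_two, Nat.mul_div_cancel_left i two_pos]
  exact ⟨2 * i + 2 + 1, by omega, by omega, by rwa [label_eq a rfl, label_eq b h.symm]⟩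

theorem exists_extLabel_ne_of_size_lt {a b : ℕ} (h : a.size < b.size) :
    ∃ k, 1 ≤ k ∧ k ≤ 2 * a.size + 4 ∧ extLabel a k ≠ extLabel b k := by
  set s := a.size
  have ha : (extBlock a).length = 2 * s + 2 := extBlock_length a
  have hb : 2 * s + 2 + 1 < (extBlock b).length := by rw [extBlock_length]; omega
  have ha₁ : extLabel a (2 * s + 2 + 1) = true := by
    rw [extLabel_add_one, ha, Nat.mod_self]
    rfl
  have ha₂ : extLabel a (2 * s + 2 + 1 + 1) = false := by
    rw [extLabel_add_one, ha, Nat.add_mod_left (2 * s + 2) 1, Nat.mod_eq_of_lt (by omega)]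
    rfl
  have hb₂ : extLabel b (2 * s + 2 + 1 + 1) = extLabel b (2 * s + 2 + 1) := by
    rw [extLabel_add_one, extLabel_add_one, Nat.mod_eq_of_lt hb, Nat.mod_eq_of_lt (by omega),
      show 2 * s + 2 + 1 = 2 * s + 1 + 2 by ring, extBlock_getD_add_two, extBlock_getD_add_two]
    congr 1
    omega
  cases hb₁ : extLabel b (2 * s + 2 + 1)
  · exact ⟨2 * s + 2 + 1, by omega, by omega, by simp [ha₁, hb₁]⟩
  · exact ⟨2 * s + 2 + 1 + 1, by omega, by omega, by simp [ha₂, hb₂, hb₁]⟩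

theorem extended_labels_differ_general (a b : ℕ) (hab : a ≠ b) :
    ∃ k : ℕ, 1 ≤ k ∧ k ≤ 2 * Nat.log 2 (min a b) + 6 ∧ extLabel a k ≠ extLabel b k := by
  have hmin := Nat.size_le_log_add_one (min a b)
  rw [Nat.size_min] at hmin
  rcases lt_trichotomy a.size b.size with h | h | h
  · obtain ⟨k, hk₁, hk, hne⟩ := exists_extLabel_ne_of_size_lt h
    exact ⟨k, hk₁, by omega, hne⟩
  · obtain ⟨k, hk₁, hk, hne⟩ := exists_extLabel_ne_of_size_eq h hab
    exact ⟨k, hk₁, by omega, hne⟩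
  · obtain ⟨k, hk₁, hk, hne⟩ := exists_extLabel_ne_of_size_lt h
    exact ⟨k, hk₁, by omega, hne.symm⟩

theorem extended_labels_differ (a b : ℕ) (ha : 0 < a) (hb : 0 < b) (hab : a ≠ b) :
    ∃ k : ℕ, 1 ≤ k ∧ k ≤ 2 * Nat.log 2 (min a b) + 6 ∧ extLabel a k ≠ extLabel b k :=
  extended_labels_differ_general a b hab
end

section
/- Let f ∈ ℕ and let m₁, m₂ ∈ ℕ satisfy (4f+4)(f+1) ≤ m₁, (4f+4)(f+1) ≤ m₂, and |m₁ − m₂| ≤ f. Define F(m) = max{ y ∈ ℕ : (4y+4)(y+1) ≤ m }. Then |F(m₁) − F(m₂)| ≤ 1. -/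
/-- The Byzantine-count estimate computed from an ID list of size `m`. -/
noncomputable def estimateF (m : ℕ) : ℕ := sSup {y : ℕ | (4 * y + 4) * (y + 1) ≤ m}

lemma estimateF_bdd (m : ℕ) : BddAbove {y : ℕ | (4 * y + 4) * (y + 1) ≤ m} := by
  refine ⟨m, fun y hy => ?_⟩
  simp only [Set.mem_setOf_eq] at hy
  nlinarith

lemma estimateF_ge (m y : ℕ) (h : (4 * y + 4) * (y + 1) ≤ m) : y ≤ estimateF m :=
  le_csSup (estimateF_bdd m) h

lemma estimateF_spec (m : ℕ) (hm : 4 ≤ m) :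
    (4 * estimateF m + 4) * (estimateF m + 1) ≤ m := by
  have hne : ({y : ℕ | (4 * y + 4) * (y + 1) ≤ m}).Nonempty := ⟨0, by simpa using hm⟩
  have := Nat.sSup_mem hne (estimateF_bdd m)
  exact this

lemma estimateF_lt (m y : ℕ) (hm : 4 ≤ m) (h : estimateF m < y) :
    m < (4 * y + 4) * (y + 1) := by
  by_contra hc
  push_neg at hc
  exact absurd (estimateF_ge m y hc) (not_le.mpr h)

theorem estimates_differ_by_at_most_one (f m₁ m₂ : ℕ)
    (h₁ : (4 * f + 4) * (f + 1) ≤ m₁) (h₂ : (4 * f + 4) * (f + 1) ≤ m₂)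
    (hdiff : (m₁ : ℤ) - m₂ ≤ f ∧ (m₂ : ℤ) - m₁ ≤ f) :
    |(estimateF m₁ : ℤ) - estimateF m₂| ≤ 1 := by
  have hm₁ : 4 ≤ m₁ := le_trans (by nlinarith) h₁
  have hm₂ : 4 ≤ m₂ := le_trans (by nlinarith) h₂
  have hf₁ : f ≤ estimateF m₁ := estimateF_ge m₁ f h₁
  have hf₂ : f ≤ estimateF m₂ := estimateF_ge m₂ f h₂
  have key : ∀ a b : ℕ, 4 ≤ a → 4 ≤ b → f ≤ estimateF a →
      (b : ℤ) - a ≤ f → (estimateF b : ℤ) - estimateF a ≤ 1 := by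
    intro a b ha hb hfa hab
    by_contra hc
    push_neg at hc
    have hlt : estimateF a + 2 ≤ estimateF b := by omega
    have h3 := estimateF_spec b hb
    set p := estimateF a with hp
    have hb' : (4 * (p + 2) + 4) * (p + 2 + 1) ≤ b := by
      calc (4 * (p + 2) + 4) * (p + 2 + 1)
          ≤ (4 * estimateF b + 4) * (estimateF b + 1) := by
            apply Nat.mul_le_mul <;> omega
        _ ≤ b := h3
    have ha' : a < (4 * (p + 1) + 4) * (p + 1 + 1) :=
      estimateF_lt a (p + 1) ha (by omega)
    have : (b : ℤ) - a ≥ 8 * p + 21 := by push_cast; nlinarith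
    have : (f : ℤ) ≥ 8 * p + 21 := le_trans this hab
    have : (p : ℤ) ≥ f := by exact_mod_cast hfa
    linarith
  obtain ⟨hd1, hd2⟩ := hdiff
  have k1 := key m₁ m₂ hm₁ hm₂ hf₁ hd2
  have k2 := key m₂ m₁ hm₂ hm₁ hf₂ hd1
  rw [abs_le]
  constructor <;> linarith
end
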